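/- In an abstract 'indexed fan' model — a triangulated convex polygon with boundary v_0, v_L, w_1, ..., w_m, v_R in which exactly one diagonal (the indexed edge) is incident to the index vertex v_L and all other diagonals are incident to v_0 — the indexed edge can be moved to the adjacent diagonal position by exactly 2 flips, and this operation is reversible. -/

import Mathlib

open scoped Classical

/-- `x` lies strictly inside the (clockwise) arc from `a` to `b` of the convex `n`-gon. -/
def ArcMem {n : ℕ} (a b x : Fin n) : Prop :=
  0 < (x - a).val ∧ (x - a).val < (b - a).val

/-- Two chords of the convex `n`-gon cross. -/
def Crossing {n : ℕ} (e f : Sym2 (Fin n)) : Prop :=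
  ∃ a b c d : Fin n, e = s(a, b) ∧ f = s(c, d) ∧ ArcMem a b c ∧ ArcMem b a d

/-- `e` is a diagonal of the convex `n`-gon. -/
def IsPolygonDiagonal {n : ℕ} [NeZero n] (e : Sym2 (Fin n)) : Prop :=
  ∃ a b : Fin n, e = s(a, b) ∧ a ≠ b ∧ b ≠ a + 1 ∧ a ≠ b + 1

/-- A triangulation of a convex `n`-gon: `n - 3` pairwise non-crossing diagonals. -/
structure Triangulation (n : ℕ) [NeZero n] where
  diags : Finset (Sym2 (Fin n))
  isDiag : ∀ e ∈ diags, IsPolygonDiagonal e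
  noncrossing : ∀ e ∈ diags, ∀ f ∈ diags, e ≠ f → ¬ Crossing e f
  card_diags : diags.card = n - 3

/-- A flip replaces one diagonal by the other diagonal of the quadrilateral formed by its
two incident triangles. -/
def Flip {n : ℕ} [NeZero n] (T T' : Triangulation n) : Prop :=
  ∃ e e' : Sym2 (Fin n), e ∈ T.diags ∧ e' ∉ T.diags ∧
    T'.diags = insert e' (T.diags.erase e)

open Fin.NatCast

lemma aux_sub_val {N : ℕ} [NeZero N] (a x : Fin N) :
    (x - a).val = if a.val ≤ x.val then x.val - a.val else N - a.val + x.val := by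
  have hx := x.isLt; have ha := a.isLt
  have h : (x - a).val = (N - a.val + x.val) % N := rfl
  rw [h]
  split_ifs with hax
  · have e : N - a.val + x.val = (x.val - a.val) + N := by omega
    rw [e, Nat.add_mod_right, Nat.mod_eq_of_lt (by omega)]
  · exact Nat.mod_eq_of_lt (by omega)

lemma aux_arcMem {N : ℕ} [NeZero N] (a b x : Fin N) :
    ArcMem a b x ↔ ((a.val < b.val ∧ a.val < x.val ∧ x.val < b.val) ∨
      (b.val < a.val ∧ (a.val < x.val ∨ x.val < b.val))) := by
  have hx := x.isLt; have ha := a.isLt; have hb := b.isLt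
  unfold ArcMem
  rw [aux_sub_val, aux_sub_val]
  split_ifs <;> omega

lemma aux_crossing {N : ℕ} [NeZero N] {p q r s : Fin N} (h : Crossing s(p,q) s(r,s)) :
    (ArcMem p q r ∧ ArcMem q p s) ∨ (ArcMem p q s ∧ ArcMem q p r) := by
  obtain ⟨a, b, c, d, he, hf, h1, h2⟩ := h
  rw [Sym2.eq_iff] at he hf
  rcases he with ⟨rfl, rfl⟩ | ⟨rfl, rfl⟩ <;> rcases hf with ⟨rfl, rfl⟩ | ⟨rfl, rfl⟩ <;> tauto

/-- In an indexed fan — a triangulated convex polygon with boundary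
`v₀ = 0, v_L = 1, w₁ = 2, …, w_m, v_R` in which exactly one diagonal, the indexed edge
`s(1,3)`, is incident to the index vertex `v_L = 1` and all other diagonals are incident
to `v₀ = 0` — the indexed edge can be moved to the adjacent diagonal position (becoming
`s(1,4)`, the other diagonals being incident to the neighbours `v₀` and `w₁` of the
index) by exactly `2` flips, and this operation is reversible: `2` flips move it back. -/
theorem indexed_fan_shift (N : ℕ) (hN : 5 ≤ N) (hNZ : NeZero N)
    (T : Triangulation N)
    (hT : T.diags = insert s((1 : Fin N), (3 : Fin N))
      ((Finset.Icc 3 (N - 2)).image fun i : ℕ => s((0 : Fin N), (i : Fin N)))) :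
    ∃ T' : Triangulation N,
      T'.diags = insert s((1 : Fin N), (4 : Fin N)) (insert s((2 : Fin N), (4 : Fin N))
        ((Finset.Icc 4 (N - 2)).image fun i : ℕ => s((0 : Fin N), (i : Fin N)))) ∧
      (∃ M : Triangulation N, Flip T M ∧ Flip M T') ∧
      (∃ M : Triangulation N, Flip T' M ∧ Flip M T) := by
  -- value lemmas
  have vnat : ∀ i : ℕ, i < N → ((i : Fin N)).val = i := fun i hi => by
    rw [Fin.val_natCast, Nat.mod_eq_of_lt hi]
  have v0 : (0 : Fin N).val = 0 := by
    rw [show (0 : Fin N) = ((0:ℕ) : Fin N) from rfl]; exact vnat 0 (by omega)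
  have v1 : (1 : Fin N).val = 1 := by
    rw [show (1 : Fin N) = ((1:ℕ) : Fin N) from rfl]; exact vnat 1 (by omega)
  have v2 : (2 : Fin N).val = 2 := by
    rw [show (2 : Fin N) = ((2:ℕ) : Fin N) from rfl]; exact vnat 2 (by omega)
  have v3 : (3 : Fin N).val = 3 := by
    rw [show (3 : Fin N) = ((3:ℕ) : Fin N) from rfl]; exact vnat 3 (by omega)
  have v4 : (4 : Fin N).val = 4 := by
    rw [show (4 : Fin N) = ((4:ℕ) : Fin N) from rfl]; exact vnat 4 (by omega)
  have vadd : ∀ a : Fin N, ((a + 1 : Fin N)).val = (a.val + 1) % N := fun a => by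
    rw [Fin.add_def, v1]
  -- abbreviations
  set E : ℕ → Sym2 (Fin N) := fun i : ℕ => s((0 : Fin N), (i : Fin N)) with hE
  set D : Sym2 (Fin N) := s((1 : Fin N), (3 : Fin N)) with hD
  set D' : Sym2 (Fin N) := s((1 : Fin N), (4 : Fin N)) with hD'
  set D'' : Sym2 (Fin N) := s((2 : Fin N), (4 : Fin N)) with hD''
  set S4 : Finset (Sym2 (Fin N)) := (Finset.Icc 4 (N - 2)).image E with hS4
  -- basic distinctness
  have nDD' : D ≠ D' := by
    rw [hD, hD', Ne, Sym2.eq_iff, Fin.ext_iff, Fin.ext_iff, Fin.ext_iff, Fin.ext_iff,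
      v1, v3, v4]
    omega
  have nDD'' : D ≠ D'' := by
    rw [hD, hD'', Ne, Sym2.eq_iff, Fin.ext_iff, Fin.ext_iff, Fin.ext_iff, Fin.ext_iff,
      v1, v2, v3, v4]
    omega
  have nD'D'' : D' ≠ D'' := by
    rw [hD', hD'', Ne, Sym2.eq_iff, Fin.ext_iff, Fin.ext_iff, Fin.ext_iff, Fin.ext_iff,
      v1, v2, v4]
    omega
  have nDE : ∀ i : ℕ, 3 ≤ i → i ≤ N - 2 → D ≠ E i := by
    intro i hi1 hi2
    have hvi : ((i : Fin N)).val = i := vnat i (by omega)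
    rw [hD, hE, Ne, Sym2.eq_iff, Fin.ext_iff, Fin.ext_iff, Fin.ext_iff, Fin.ext_iff,
      v0, v1, v3, hvi]
    omega
  have nD'E : ∀ i : ℕ, 3 ≤ i → i ≤ N - 2 → D' ≠ E i := by
    intro i hi1 hi2
    have hvi : ((i : Fin N)).val = i := vnat i (by omega)
    rw [hD', hE, Ne, Sym2.eq_iff, Fin.ext_iff, Fin.ext_iff, Fin.ext_iff, Fin.ext_iff,
      v0, v1, v4, hvi]
    omega
  have nD''E : ∀ i : ℕ, 3 ≤ i → i ≤ N - 2 → D'' ≠ E i := by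
    intro i hi1 hi2
    have hvi : ((i : Fin N)).val = i := vnat i (by omega)
    rw [hD'', hE, Ne, Sym2.eq_iff, Fin.ext_iff, Fin.ext_iff, Fin.ext_iff, Fin.ext_iff,
      v0, v2, v4, hvi]
    omega
  have injE : ∀ i : ℕ, i ≤ N - 2 → ∀ j : ℕ, j ≤ N - 2 → E i = E j → i = j := by
    intro i hi j hj h
    have hvi : ((i : Fin N)).val = i := vnat i (by omega)
    have hvj : ((j : Fin N)).val = j := vnat j (by omega)
    rw [hE, Sym2.eq_iff, Fin.ext_iff, Fin.ext_iff, Fin.ext_iff, Fin.ext_iff,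
      v0, hvi, hvj] at h
    omega
  have hE3S4 : E 3 ∉ S4 := by
    rw [hS4]
    simp only [Finset.mem_image, Finset.mem_Icc]
    rintro ⟨i, ⟨hi1, hi2⟩, h⟩
    have := injE i hi2 3 (by omega) h
    omega
  -- membership characterization of S4
  have memS4 : ∀ x : Sym2 (Fin N), x ∈ S4 ↔ ∃ i : ℕ, 4 ≤ i ∧ i ≤ N - 2 ∧ x = E i := by
    intro x
    rw [hS4]
    simp only [Finset.mem_image, Finset.mem_Icc]
    constructor
    · rintro ⟨i, ⟨h1, h2⟩, h3⟩; exact ⟨i, h1, h2, h3.symm⟩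
    · rintro ⟨i, h1, h2, h3⟩; exact ⟨i, ⟨h1, h2⟩, h3.symm⟩
  -- diagonal facts
  have h5mod : 5 % N = 0 ∨ 5 % N = 5 := by
    rcases Nat.lt_or_ge 5 N with h | h
    · right; exact Nat.mod_eq_of_lt h
    · left; have : N = 5 := by omega
      rw [this]
  have diagD : IsPolygonDiagonal D := by
    refine ⟨1, 3, rfl, ?_, ?_, ?_⟩
    · rw [Ne, Fin.ext_iff, v1, v3]; omega
    · rw [Ne, Fin.ext_iff, vadd, v1, v3, Nat.mod_eq_of_lt (by omega : 1 + 1 < N)]; omega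
    · rw [Ne, Fin.ext_iff, vadd, v1, v3, Nat.mod_eq_of_lt (by omega : 3 + 1 < N)]; omega
  have diagD' : IsPolygonDiagonal D' := by
    refine ⟨1, 4, rfl, ?_, ?_, ?_⟩
    · rw [Ne, Fin.ext_iff, v1, v4]; omega
    · rw [Ne, Fin.ext_iff, vadd, v1, v4, Nat.mod_eq_of_lt (by omega : 1 + 1 < N)]; omega
    · rw [Ne, Fin.ext_iff, vadd, v1, v4, show 4 + 1 = 5 from rfl]
      rcases h5mod with h | h <;> omega
  have diagD'' : IsPolygonDiagonal D'' := by
    refine ⟨2, 4, rfl, ?_, ?_, ?_⟩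
    · rw [Ne, Fin.ext_iff, v2, v4]; omega
    · rw [Ne, Fin.ext_iff, vadd, v2, v4, Nat.mod_eq_of_lt (by omega : 2 + 1 < N)]; omega
    · rw [Ne, Fin.ext_iff, vadd, v2, v4, show 4 + 1 = 5 from rfl]
      rcases h5mod with h | h <;> omega
  have diagE : ∀ i : ℕ, 3 ≤ i → i ≤ N - 2 → IsPolygonDiagonal (E i) := by
    intro i hi1 hi2
    have hvi : ((i : Fin N)).val = i := vnat i (by omega)
    refine ⟨0, (i : Fin N), rfl, ?_, ?_, ?_⟩
    · rw [Ne, Fin.ext_iff, v0, hvi]; omega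
    · rw [Ne, Fin.ext_iff, vadd, v0, hvi, Nat.mod_eq_of_lt (by omega : 0 + 1 < N)]; omega
    · rw [Ne, Fin.ext_iff, vadd, v0, hvi, Nat.mod_eq_of_lt (by omega : i + 1 < N)]; omega
  -- the middle triangulation M
  have Mnoncross : ∀ e ∈ insert D (insert D' S4), ∀ f ∈ insert D (insert D' S4),
      e ≠ f → ¬ Crossing e f := by
    intro e he f hf hne hc
    rw [Finset.mem_insert, Finset.mem_insert, memS4] at he hf
    rcases he with rfl | rfl | ⟨i, hi1, hi2, rfl⟩ <;>
      rcases hf with rfl | rfl | ⟨j, hj1, hj2, rfl⟩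
    · exact hne rfl
    · have H := aux_crossing (hD' ▸ hD ▸ hc)
      simp only [aux_arcMem, v1, v3, v4] at H
      omega
    · have hvj : ((j : Fin N)).val = j := vnat j (by omega)
      have H := aux_crossing (hE ▸ hD ▸ hc)
      simp only [aux_arcMem, v0, v1, v3, hvj] at H
      omega
    · have H := aux_crossing (hD ▸ hD' ▸ hc)
      simp only [aux_arcMem, v1, v3, v4] at H
      omega
    · exact hne rfl
    · have hvj : ((j : Fin N)).val = j := vnat j (by omega)
      have H := aux_crossing (hE ▸ hD' ▸ hc)
      simp only [aux_arcMem, v0, v1, v4, hvj] at H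
      omega
    · have hvi : ((i : Fin N)).val = i := vnat i (by omega)
      have H := aux_crossing (hD ▸ hE ▸ hc)
      simp only [aux_arcMem, v0, v1, v3, hvi] at H
      omega
    · have hvi : ((i : Fin N)).val = i := vnat i (by omega)
      have H := aux_crossing (hD' ▸ hE ▸ hc)
      simp only [aux_arcMem, v0, v1, v4, hvi] at H
      omega
    · have hvi : ((i : Fin N)).val = i := vnat i (by omega)
      have hvj : ((j : Fin N)).val = j := vnat j (by omega)
      have H := aux_crossing (hE ▸ hc)
      simp only [aux_arcMem, v0, hvi, hvj] at H
      omega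
  have cardS4 : S4.card = N - 5 := by
    rw [hS4, Finset.card_image_of_injOn, Nat.card_Icc]
    · omega
    · intro i hi j hj h
      simp only [Finset.coe_Icc, Set.mem_Icc] at hi hj
      exact injE i hi.2 j hj.2 h
  have hDmem : D ∉ insert D' S4 := by
    rw [Finset.mem_insert, memS4]
    rintro (h | ⟨i, hi1, hi2, h⟩)
    · exact nDD' h
    · exact nDE i (by omega) hi2 h
  have hD'S4 : D' ∉ S4 := by
    rw [memS4]
    rintro ⟨i, hi1, hi2, h⟩
    exact nD'E i (by omega) hi2 h
  have hD''S4 : D'' ∉ S4 := by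
    rw [memS4]
    rintro ⟨i, hi1, hi2, h⟩
    exact nD''E i (by omega) hi2 h
  have Mcard : (insert D (insert D' S4)).card = N - 3 := by
    rw [Finset.card_insert_of_notMem hDmem, Finset.card_insert_of_notMem hD'S4, cardS4]
    omega
  have MisDiag : ∀ e ∈ insert D (insert D' S4), IsPolygonDiagonal e := by
    intro e he
    rw [Finset.mem_insert, Finset.mem_insert, memS4] at he
    rcases he with rfl | rfl | ⟨i, hi1, hi2, rfl⟩
    · exact diagD
    · exact diagD'
    · exact diagE i (by omega) hi2
  set M : Triangulation N := ⟨insert D (insert D' S4), MisDiag, Mnoncross, Mcard⟩ with hM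
  -- the target triangulation T'
  have T'noncross : ∀ e ∈ insert D' (insert D'' S4), ∀ f ∈ insert D' (insert D'' S4),
      e ≠ f → ¬ Crossing e f := by
    intro e he f hf hne hc
    rw [Finset.mem_insert, Finset.mem_insert, memS4] at he hf
    rcases he with rfl | rfl | ⟨i, hi1, hi2, rfl⟩ <;>
      rcases hf with rfl | rfl | ⟨j, hj1, hj2, rfl⟩
    · exact hne rfl
    · have H := aux_crossing (hD'' ▸ hD' ▸ hc)
      simp only [aux_arcMem, v1, v2, v4] at H
      omega
    · have hvj : ((j : Fin N)).val = j := vnat j (by omega)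
      have H := aux_crossing (hE ▸ hD' ▸ hc)
      simp only [aux_arcMem, v0, v1, v4, hvj] at H
      omega
    · have H := aux_crossing (hD' ▸ hD'' ▸ hc)
      simp only [aux_arcMem, v1, v2, v4] at H
      omega
    · exact hne rfl
    · have hvj : ((j : Fin N)).val = j := vnat j (by omega)
      have H := aux_crossing (hE ▸ hD'' ▸ hc)
      simp only [aux_arcMem, v0, v2, v4, hvj] at H
      omega
    · have hvi : ((i : Fin N)).val = i := vnat i (by omega)
      have H := aux_crossing (hD' ▸ hE ▸ hc)
      simp only [aux_arcMem, v0, v1, v4, hvi] at H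
      omega
    · have hvi : ((i : Fin N)).val = i := vnat i (by omega)
      have H := aux_crossing (hD'' ▸ hE ▸ hc)
      simp only [aux_arcMem, v0, v2, v4, hvi] at H
      omega
    · have hvi : ((i : Fin N)).val = i := vnat i (by omega)
      have hvj : ((j : Fin N)).val = j := vnat j (by omega)
      have H := aux_crossing (hE ▸ hc)
      simp only [aux_arcMem, v0, hvi, hvj] at H
      omega
  have hD'mem : D' ∉ insert D'' S4 := by
    rw [Finset.mem_insert, memS4]
    rintro (h | ⟨i, hi1, hi2, h⟩)
    · exact nD'D'' h
    · exact nD'E i (by omega) hi2 h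
  have T'card : (insert D' (insert D'' S4)).card = N - 3 := by
    rw [Finset.card_insert_of_notMem hD'mem, Finset.card_insert_of_notMem hD''S4, cardS4]
    omega
  have T'isDiag : ∀ e ∈ insert D' (insert D'' S4), IsPolygonDiagonal e := by
    intro e he
    rw [Finset.mem_insert, Finset.mem_insert, memS4] at he
    rcases he with rfl | rfl | ⟨i, hi1, hi2, rfl⟩
    · exact diagD'
    · exact diagD''
    · exact diagE i (by omega) hi2
  refine ⟨⟨insert D' (insert D'' S4), T'isDiag, T'noncross, T'card⟩, rfl, ?_, ?_⟩
  -- rewrite T.diags in the convenient form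
  · -- forward: two flips from T to T'
    have hIcc : Finset.Icc 3 (N - 2) = insert 3 (Finset.Icc 4 (N - 2)) := by
      ext x
      simp only [Finset.mem_Icc, Finset.mem_insert]
      omega
    have hT' : T.diags = insert D (insert (E 3) S4) := by
      rw [hT, hIcc, Finset.image_insert]
    refine ⟨M, ⟨E 3, D', ?_, ?_, ?_⟩, ⟨D, D'', ?_, ?_, ?_⟩⟩
    · rw [hT']
      exact Finset.mem_insert_of_mem (Finset.mem_insert_self _ _)
    · rw [hT', Finset.mem_insert, Finset.mem_insert, memS4]
      rintro (h | h | ⟨i, hi1, hi2, h⟩)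
      · exact nDD' h.symm
      · exact nD'E 3 (by omega) (by omega) h
      · exact nD'E i (by omega) hi2 h
    · show insert D (insert D' S4) = insert D' (T.diags.erase (E 3))
      rw [hT', Finset.erase_insert_of_ne (nDE 3 (by omega) (by omega)),
        Finset.erase_insert hE3S4, Finset.insert_comm]
    · exact Finset.mem_insert_self _ _
    · rw [hM, Finset.mem_insert, Finset.mem_insert, memS4]
      rintro (h | h | ⟨i, hi1, hi2, h⟩)
      · exact nDD'' h.symm
      · exact nD'D'' h.symm
      · exact nD''E i (by omega) hi2 h
    · show insert D' (insert D'' S4) = insert D'' ((insert D (insert D' S4)).erase D)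
      rw [Finset.erase_insert hDmem, Finset.insert_comm]
  · -- backward: two flips from T' back to T
    have hIcc : Finset.Icc 3 (N - 2) = insert 3 (Finset.Icc 4 (N - 2)) := by
      ext x
      simp only [Finset.mem_Icc, Finset.mem_insert]
      omega
    have hT' : T.diags = insert D (insert (E 3) S4) := by
      rw [hT, hIcc, Finset.image_insert]
    refine ⟨M, ⟨D'', D, ?_, ?_, ?_⟩, ⟨D', E 3, ?_, ?_, ?_⟩⟩
    · exact Finset.mem_insert_of_mem (Finset.mem_insert_self _ _)
    · show D ∉ insert D' (insert D'' S4)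
      rw [Finset.mem_insert, Finset.mem_insert, memS4]
      rintro (h | h | ⟨i, hi1, hi2, h⟩)
      · exact nDD' h
      · exact nDD'' h
      · exact nDE i (by omega) hi2 h
    · show (insert D (insert D' S4) : Finset (Sym2 (Fin N)))
        = insert D ((insert D' (insert D'' S4)).erase D'')
      rw [Finset.erase_insert_of_ne nD'D'', Finset.erase_insert hD''S4]
    · rw [hM]
      exact Finset.mem_insert_of_mem (Finset.mem_insert_self _ _)
    · rw [hM, Finset.mem_insert, Finset.mem_insert, memS4]
      rintro (h | h | ⟨i, hi1, hi2, h⟩)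
      · exact nDE 3 (by omega) (by omega) h.symm
      · exact nD'E 3 (by omega) (by omega) h.symm
      · have := injE 3 (by omega) i hi2 h
        omega
    · show T.diags = insert (E 3) ((insert D (insert D' S4)).erase D')
      rw [hT', Finset.erase_insert_of_ne nDD', Finset.erase_insert hD'S4,
        Finset.insert_comm]
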